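/- arXiv:1802.00980 — 6 statements merged into one kernel-verified Lean document; each statement's English description precedes it below -/
import Mathlib

section
/- Let Q be a primary ℂ[z]-submodule of ℂ[z] ⊗ ℂ^r whose associated prime ideal has root 0 (i.e., every element of the associated prime vanishes at the origin). Let S[Q] = ℂ[[z]]·Q be the ℂ[[z]]-submodule of ℂ[[z]] ⊗ ℂ^r generated by Q. Then Q = S[Q] ∩ (ℂ[z] ⊗ ℂ^r). -/
open MvPolynomial

namespace PrimaryAux

variable {d : ℕ}

/-- total degree of an exponent -/
def deg (α : Fin d →₀ ℕ) : ℕ := α.sum fun _ n => n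

lemma deg_add (α β : Fin d →₀ ℕ) : deg (α + β) = deg α + deg β := by
  simpa [deg] using Finsupp.sum_add_index' (by simp) (by simp)

lemma apply_le_deg (α : Fin d →₀ ℕ) (i : Fin d) : α i ≤ deg α := by
  by_cases h : α i = 0
  · simp [h]
  · exact Finset.single_le_sum (f := fun j => α j) (fun _ _ => Nat.zero_le _)
      (Finsupp.mem_support_iff.mpr h)

/-- truncation of a power series below total degree `N` -/
noncomputable def trunc' (N : ℕ) (f : MvPowerSeries (Fin d) ℂ) : MvPolynomial (Fin d) ℂ :=
  ∑ α ∈ (Finset.Iic (Finsupp.equivFunOnFinite.symm fun _ : Fin d => N)).filter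
      (fun α => deg α < N),
    MvPolynomial.monomial α (MvPowerSeries.coeff α f)

lemma coeff_trunc' (N : ℕ) (f : MvPowerSeries (Fin d) ℂ) (β : Fin d →₀ ℕ) :
    MvPolynomial.coeff β (trunc' N f) =
      if deg β < N then MvPowerSeries.coeff β f else 0 := by
  rw [trunc', MvPolynomial.coeff_sum]
  simp only [MvPolynomial.coeff_monomial]
  rw [Finset.sum_ite_eq']
  congr 1
  simp only [Finset.mem_filter, Finset.mem_Iic, eq_iff_iff]
  constructor
  · exact fun h => h.2
  · intro h
    refine ⟨?_, h⟩
    rw [Finsupp.le_iff]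
    intro i _
    simp only [Finsupp.coe_equivFunOnFinite_symm]
    exact le_of_lt (lt_of_le_of_lt (apply_le_deg β i) h)

lemma coeff_mul_zero (N : ℕ) (f g : MvPowerSeries (Fin d) ℂ)
    (hf : ∀ α, deg α < N → MvPowerSeries.coeff α f = 0) :
    ∀ α, deg α < N → MvPowerSeries.coeff α (f * g) = 0 := by
  intro α hα
  rw [MvPowerSeries.coeff_mul]
  refine Finset.sum_eq_zero fun p hp => ?_
  rw [Finset.HasAntidiagonal.mem_antidiagonal] at hp
  have : deg p.1 ≤ deg α := by
    rw [← hp, deg_add]; exact Nat.le_add_right _ _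
  rw [hf p.1 (lt_of_le_of_lt this hα), zero_mul]

lemma monomial_mem_pow (N : ℕ) : ∀ (α : Fin d →₀ ℕ) (c : ℂ), N ≤ deg α →
    MvPolynomial.monomial α c ∈ (Ideal.span (Set.range (X : Fin d → MvPolynomial (Fin d) ℂ)))^N := by
  induction N with
  | zero => intro α c _; simp
  | succ N ih =>
    intro α c hα
    have hne : α ≠ 0 := by
      rintro rfl
      simp [deg] at hα
    obtain ⟨i, hi⟩ : ∃ i, α i ≠ 0 := by
      by_contra hcon
      push_neg at hcon
      exact hne (Finsupp.ext fun i => hcon i)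
    have hle : Finsupp.single i 1 ≤ α := by
      rw [Finsupp.single_le_iff]; omega
    set α' := α - Finsupp.single i 1 with hα'
    have hsum : Finsupp.single i 1 + α' = α := by
      rw [hα', add_comm]; exact tsub_add_cancel_of_le hle
    have hdeg : N ≤ deg α' := by
      have := deg_add (Finsupp.single i 1) α'
      rw [hsum] at this
      have h1 : deg (Finsupp.single i 1) = 1 := by simp [deg]
      omega
    have hmono : MvPolynomial.monomial α c =
        X i * MvPolynomial.monomial α' c := by
      rw [X, MvPolynomial.monomial_mul, one_mul, hsum]
    rw [hmono, pow_succ']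
    exact Ideal.mul_mem_mul (Ideal.subset_span ⟨i, rfl⟩) (ih α' c hdeg)

lemma low_vanish_mem (N : ℕ) (p : MvPolynomial (Fin d) ℂ)
    (hp : ∀ α, deg α < N → MvPolynomial.coeff α p = 0) :
    p ∈ (Ideal.span (Set.range (X : Fin d → MvPolynomial (Fin d) ℂ)))^N := by
  rw [p.as_sum]
  refine Submodule.sum_mem _ fun v hv => ?_
  refine monomial_mem_pow N v _ ?_
  by_contra hcon
  push_neg at hcon
  exact (MvPolynomial.mem_support_iff.mp hv) (hp v hcon)

end PrimaryAux


open PrimaryAux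

/-- Let `Q` be a primary `ℂ[z]`-submodule of `ℂ[z] ⊗ ℂ^r` (i.e. `Q` is proper and for every
`p ∈ ℂ[z]` multiplication by `p` on the quotient is injective or nilpotent) whose associated
prime (the set of `p` acting nilpotently) has root `0`.  If `S[Q]` is the `ℂ[[z]]`-submodule of
`ℂ[[z]] ⊗ ℂ^r` generated by `Q`, then `Q = S[Q] ∩ (ℂ[z] ⊗ ℂ^r)`. -/
theorem primary_module_eq_powerSeries_module_inter (d r : ℕ)
    (Q : Submodule (MvPolynomial (Fin d) ℂ) (Fin r → MvPolynomial (Fin d) ℂ))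
    (hproper : Q ≠ ⊤)
    (hprimary : ∀ p : MvPolynomial (Fin d) ℂ,
      (∀ x, p • x ∈ Q → x ∈ Q) ∨ (∃ n : ℕ, ∀ x, p ^ n • x ∈ Q))
    (hroot : ∀ p : MvPolynomial (Fin d) ℂ,
      (∃ n : ℕ, ∀ x, p ^ n • x ∈ Q) → MvPolynomial.eval (0 : Fin d → ℂ) p = 0) :
    ∀ h : Fin r → MvPolynomial (Fin d) ℂ,
      h ∈ Q ↔
        (fun t => MvPolynomial.coeToMvPowerSeries.ringHom (h t)) ∈
          Submodule.span (MvPowerSeries (Fin d) ℂ)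
            ((fun v : Fin r → MvPolynomial (Fin d) ℂ =>
              fun t => MvPolynomial.coeToMvPowerSeries.ringHom (v t)) ''
                (Q : Set (Fin r → MvPolynomial (Fin d) ℂ))) := by
  intro h
  constructor
  · intro hQ
    exact Submodule.subset_span ⟨h, hQ, rfl⟩
  · intro hs
    set I : Ideal (MvPolynomial (Fin d) ℂ) :=
      Ideal.span (Set.range (X : Fin d → MvPolynomial (Fin d) ℂ)) with hI
    have key : ∀ N : ℕ, h ∈ Q ⊔ (I ^ N • ⊤ : Submodule (MvPolynomial (Fin d) ℂ) (Fin r → MvPolynomial (Fin d) ℂ)) := by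
      intro N
      rw [Submodule.mem_span_set'] at hs
      obtain ⟨n, f, g, hsum⟩ := hs
      choose q hqQ hq using fun i => (g i).2
      set p := fun i => trunc' N (f i) with hp
      have hpq : (∑ i, p i • q i) ∈ Q :=
        Submodule.sum_mem _ fun i _ => Q.smul_mem _ (hqQ i)
      have hdiff : h - ∑ i, p i • q i ∈ (I ^ N • ⊤ : Submodule (MvPolynomial (Fin d) ℂ) (Fin r → MvPolynomial (Fin d) ℂ)) := by
        have hcomp : ∀ t, (h - ∑ i, p i • q i) t ∈ I ^ N := by
          intro t
          apply low_vanish_mem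
          intro α hα
          have hqt : ∀ i, (g i : Fin r → MvPowerSeries (Fin d) ℂ) t
              = MvPolynomial.coeToMvPowerSeries.ringHom (q i t) := by
            intro i
            rw [← hq i]
          have hsumt : (∑ i, f i * MvPolynomial.coeToMvPowerSeries.ringHom (q i t))
              = MvPolynomial.coeToMvPowerSeries.ringHom (h t) := by
            have := congrFun hsum t
            simpa [hqt] using this
          have e1 : ∀ i, (MvPowerSeries.coeff α)
              ((MvPolynomial.coeToMvPowerSeries.ringHom (p i) : MvPowerSeries (Fin d) ℂ) *
                MvPolynomial.coeToMvPowerSeries.ringHom (q i t))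
              = MvPolynomial.coeff α (p i * q i t) := by
            intro i
            rw [← map_mul, MvPolynomial.coeToMvPowerSeries.ringHom_apply,
              MvPolynomial.coeff_coe]
          have e2 : (∑ i, (MvPowerSeries.coeff α)
                (f i * MvPolynomial.coeToMvPowerSeries.ringHom (q i t)))
              = MvPolynomial.coeff α (h t) := by
            rw [← map_sum, hsumt, MvPolynomial.coeToMvPowerSeries.ringHom_apply,
              MvPolynomial.coeff_coe]
          have e4 : MvPolynomial.coeff α ((h - ∑ i, p i • q i) t)
              = MvPolynomial.coeff α (h t) - ∑ i, MvPolynomial.coeff α (p i * q i t) := by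
            simp [MvPolynomial.coeff_sub, MvPolynomial.coeff_sum]
          have e5 : ∑ i, MvPolynomial.coeff α (p i * q i t)
              = ∑ i, (MvPowerSeries.coeff α)
                  ((MvPolynomial.coeToMvPowerSeries.ringHom (p i) : MvPowerSeries (Fin d) ℂ) *
                    MvPolynomial.coeToMvPowerSeries.ringHom (q i t)) :=
            Finset.sum_congr rfl fun i _ => (e1 i).symm
          rw [e4, ← e2, e5, ← Finset.sum_sub_distrib]
          refine Finset.sum_eq_zero fun i _ => ?_
          rw [← map_sub, ← sub_mul]
          refine coeff_mul_zero N _ _ ?_ α hα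
          intro β hβ
          rw [map_sub, MvPolynomial.coeToMvPowerSeries.ringHom_apply,
            MvPolynomial.coeff_coe, hp]
          simp only [coeff_trunc', hβ, if_pos, sub_self]
        have hrepr : (h - ∑ i, p i • q i)
            = ∑ t, Pi.single t ((h - ∑ i, p i • q i) t) :=
          (Finset.univ_sum_single _).symm
        rw [hrepr]
        refine Submodule.sum_mem _ fun t _ => ?_
        have hsingle : Pi.single t ((h - ∑ i, p i • q i) t)
            = ((h - ∑ i, p i • q i) t) • (Pi.single t 1 : Fin r → MvPolynomial (Fin d) ℂ) := by
          funext s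
          by_cases hts : t = s
          · subst hts; simp
          · simp [Pi.single_apply, hts]
        rw [hsingle]
        exact Submodule.smul_mem_smul (hcomp t) Submodule.mem_top
      have := Submodule.add_mem _ (Submodule.mem_sup_left hpq)
        (Submodule.mem_sup_right hdiff)
      simpa using this
    -- Krull intersection part
    have hq2 : ∀ N : ℕ, Submodule.Quotient.mk (p := Q) h ∈
        (I ^ N • ⊤ : Submodule (MvPolynomial (Fin d) ℂ) ((Fin r → MvPolynomial (Fin d) ℂ) ⧸ Q)) := by
      intro N
      have h1 : Q.mkQ h ∈ Submodule.map Q.mkQ (Q ⊔ I ^ N • ⊤) :=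
        Submodule.mem_map_of_mem (key N)
      rw [Submodule.map_sup, Submodule.map_smul'', Submodule.map_top,
        Submodule.range_mkQ] at h1
      have h2 : Submodule.map Q.mkQ Q = ⊥ := by
        rw [eq_bot_iff]
        rintro x ⟨y, hy, rfl⟩
        simpa [Submodule.mkQ_apply, Submodule.Quotient.mk_eq_zero] using hy
      rw [h2, bot_sup_eq] at h1
      exact h1
    have hK : Submodule.Quotient.mk (p := Q) h ∈
        (⨅ N : ℕ, (I ^ N • ⊤ : Submodule (MvPolynomial (Fin d) ℂ) ((Fin r → MvPolynomial (Fin d) ℂ) ⧸ Q))) :=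
      Submodule.mem_iInf _ |>.mpr hq2
    rw [Ideal.mem_iInf_smul_pow_eq_bot_iff] at hK
    obtain ⟨rr, hrr⟩ := hK
    have hpQ : (1 - (rr : MvPolynomial (Fin d) ℂ)) • h ∈ Q := by
      rw [← Submodule.Quotient.mk_eq_zero Q, Submodule.Quotient.mk_smul,
        sub_smul, one_smul, hrr, sub_self]
    have hev : MvPolynomial.eval (0 : Fin d → ℂ) (1 - (rr : MvPolynomial (Fin d) ℂ)) = 1 := by
      have hker : I ≤ RingHom.ker (MvPolynomial.eval (0 : Fin d → ℂ)) := by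
        rw [hI, Ideal.span_le]
        rintro _ ⟨i, rfl⟩
        simp [RingHom.mem_ker, MvPolynomial.eval_X]
      have h0 : MvPolynomial.eval (0 : Fin d → ℂ) (rr : MvPolynomial (Fin d) ℂ) = 0 := hker rr.2
      rw [map_sub, map_one, h0, sub_zero]
    rcases hprimary (1 - (rr : MvPolynomial (Fin d) ℂ)) with hinj | hnil
    · exact hinj h hpQ
    · have := hroot _ hnil
      rw [hev] at this
      norm_num at this
end

section
/- A closed subspace A of C(ℤ^d) ⊗ ℂ^r is invariant under the coordinate shift operators W_i and their inverses (where (W_i u)(k) = u(k − e_i)) if and only if its annihilator A^⊥ in ℂ(z) ⊗ ℂ^r is a ℂ(z)-submodule of ℂ(z) ⊗ ℂ^r. -/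
/-- `ℂ(z) ⊗ ℂ^r`: vector-valued Laurent polynomials in `d` variables. -/
abbrev LauV (d r : ℕ) := Fin r → AddMonoidAlgebra ℂ (Fin d → ℤ)

/-- `C(ℤ^d) ⊗ ℂ^r`: `ℂ^r`-valued multi-sequences, with the product topology. -/
abbrev MSeq (d r : ℕ) := (Fin d → ℤ) → Fin r → ℂ

/-- The bilinear pairing `⟨p, u⟩ = Σ_i Σ_k a_k u_k`. -/
noncomputable def lauPairing (d r : ℕ) (p : LauV d r) (u : MSeq d r) : ℂ :=
  ∑ t : Fin r, (p t).coeff.sum fun k a => a * u k t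

/-- The annihilator in `ℂ(z) ⊗ ℂ^r` of a set of multi-sequences. -/
noncomputable def annOfSeq (d r : ℕ) (A : Set (MSeq d r)) : Set (LauV d r) :=
  {p | ∀ u ∈ A, lauPairing d r p u = 0}

/-- The pairing of one Laurent polynomial against a scalar sequence, as a linear map. -/
noncomputable def lcPair {d : ℕ} (v : (Fin d → ℤ) → ℂ) :
    AddMonoidAlgebra ℂ (Fin d → ℤ) →ₗ[ℂ] ℂ :=
  Finsupp.linearCombination ℂ v ∘ₗ (AddMonoidAlgebra.coeffLinearEquiv ℂ).toLinearMap

lemma lcPair_apply {d : ℕ} (v : (Fin d → ℤ) → ℂ) (f : AddMonoidAlgebra ℂ (Fin d → ℤ)) :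
    lcPair v f = f.coeff.sum fun k a => a * v k := by
  unfold lcPair
  rw [LinearMap.comp_apply]
  erw [Finsupp.linearCombination_apply]
  rfl

lemma lcPair_single {d : ℕ} (v : (Fin d → ℤ) → ℂ) (k : Fin d → ℤ) (c : ℂ) :
    lcPair v (AddMonoidAlgebra.single k c) = c * v k := by
  rw [lcPair_apply, AddMonoidAlgebra.coeff_single, Finsupp.sum_single_index]; simp

lemma lauPairing_eq (d r : ℕ) (p : LauV d r) (u : MSeq d r) :
    lauPairing d r p u = ∑ t : Fin r, lcPair (fun k => u k t) (p t) := by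
  unfold lauPairing
  exact Finset.sum_congr rfl fun t _ => (lcPair_apply _ _).symm

lemma lcPair_single_mul {d : ℕ} (m : Fin d → ℤ) (a : ℂ)
    (f : AddMonoidAlgebra ℂ (Fin d → ℤ)) (v : (Fin d → ℤ) → ℂ) :
    lcPair v (AddMonoidAlgebra.single m a * f) = a * lcPair (fun k => v (m + k)) f := by
  induction f using AddMonoidAlgebra.induction_linear with
  | zero => simp
  | add f g hf hg => rw [mul_add, map_add, map_add, hf, hg]; ring
  | single n b =>
    rw [AddMonoidAlgebra.single_mul_single]
    rw [lcPair_single]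
    rw [lcPair_single]
    ring

lemma pairing_single_mul (d r : ℕ) (m : Fin d → ℤ) (a : ℂ) (p : LauV d r) (u : MSeq d r) :
    lauPairing d r (fun t => AddMonoidAlgebra.single m a * p t) u
      = a * lauPairing d r p (fun k => u (k + m)) := by
  rw [lauPairing_eq, lauPairing_eq, Finset.mul_sum]
  refine Finset.sum_congr rfl fun t _ => ?_
  rw [lcPair_single_mul]
  have : (fun k => u (m + k) t) = fun k => u (k + m) t := by
    funext k; rw [add_comm]
  rw [this]

lemma lauPairing_add (d r : ℕ) (p₁ p₂ : LauV d r) (u : MSeq d r) :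
    lauPairing d r (fun t => p₁ t + p₂ t) u
      = lauPairing d r p₁ u + lauPairing d r p₂ u := by
  rw [lauPairing_eq, lauPairing_eq, lauPairing_eq, ← Finset.sum_add_distrib]
  exact Finset.sum_congr rfl fun t _ => map_add _ _ _

/-- Bipolar-type lemma: a closed subspace contains every vector annihilated by its
annihilator. -/
lemma mem_of_pairing_eq_zero (d r : ℕ) (A : Submodule ℂ (MSeq d r))
    (hA : IsClosed (A : Set (MSeq d r))) (v : MSeq d r)
    (hv : ∀ p ∈ annOfSeq d r (A : Set (MSeq d r)), lauPairing d r p v = 0) : v ∈ A := by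
  by_contra hvA
  have hopen : IsOpen ((A : Set (MSeq d r))ᶜ) := hA.isOpen_compl
  rw [isOpen_pi_iff] at hopen
  obtain ⟨I, U, hU, hsub⟩ := hopen v hvA
  -- the projection onto the coordinates of `I`
  set π : MSeq d r →ₗ[ℂ] (↥I → Fin r → ℂ) :=
    LinearMap.funLeft ℂ (Fin r → ℂ) (fun k : ↥I => (k : Fin d → ℤ)) with hπdef
  have hπ : ∀ (w : MSeq d r) (k : ↥I), π w k = w (k : Fin d → ℤ) := fun _ _ => rfl
  set W : Submodule ℂ (↥I → Fin r → ℂ) := A.map π with hWdef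
  have hπv : π v ∉ W := by
    rintro ⟨a, haA, ha⟩
    have haU : a ∈ (I : Set (Fin d → ℤ)).pi U := by
      intro k hk
      have : a k = v k := by
        have := congrFun ha ⟨k, hk⟩
        rw [hπ, hπ] at this
        exact this
      rw [this]
      exact (hU k hk).2
    exact hsub haU haA
  obtain ⟨φ, hφv, hφW⟩ := W.exists_dual_map_eq_bot_of_notMem hπv inferInstance
  have hφA : ∀ a ∈ A, φ (π a) = 0 := by
    intro a ha
    have hmem : φ (π a) ∈ W.map φ := ⟨π a, ⟨a, ha, rfl⟩, rfl⟩
    rw [hφW] at hmem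
    simpa using hmem
  -- the Laurent polynomial realizing `φ ∘ π`
  set e : ↥I → Fin r → (↥I → Fin r → ℂ) :=
    fun k t => Pi.single k (Pi.single t 1) with hedef
  set p : LauV d r := fun t => ∑ k : ↥I, AddMonoidAlgebra.single (k : Fin d → ℤ) (φ (e k t)) with hpdef
  have hπsum : ∀ w : MSeq d r, π w = ∑ k : ↥I, ∑ t : Fin r, w (k : Fin d → ℤ) t • e k t := by
    intro w
    funext k' t'
    simp only [Finset.sum_apply, hedef, Pi.smul_apply, Pi.single_apply, smul_eq_mul, hπ]
    simp [apply_ite (fun g : Fin r → ℂ => g t'), Finset.sum_ite_eq, Pi.single_apply]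
  have hkey : ∀ w : MSeq d r, lauPairing d r p w = φ (π w) := by
    intro w
    rw [lauPairing_eq, hπsum w]
    simp only [map_sum, map_smul, smul_eq_mul]
    rw [Finset.sum_comm]
    refine Finset.sum_congr rfl fun t _ => ?_
    rw [hpdef]
    simp only [map_sum, lcPair_single]
    exact Finset.sum_congr rfl fun k _ => mul_comm _ _
  have hpann : p ∈ annOfSeq d r (A : Set (MSeq d r)) := by
    intro a ha
    rw [hkey]
    exact hφA a ha
  have := hv p hpann
  rw [hkey] at this
  exact hφv this

/-- A closed subspace `A ⊆ C(ℤ^d) ⊗ ℂ^r` is invariant under the shift operators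
`(W_i u)(k) = u(k − e_i)` and their inverses if and only if its annihilator `A^⊥` is a
`ℂ(z)`-submodule of `ℂ(z) ⊗ ℂ^r`, i.e. is closed under multiplication by every Laurent
polynomial. -/
theorem shift_invariant_iff_annihilator_is_module (d r : ℕ)
    (A : Submodule ℂ (MSeq d r)) (hA : IsClosed (A : Set (MSeq d r))) :
    (∀ (i : Fin d), ∀ u ∈ A,
        (fun k => u (k - Pi.single i 1)) ∈ A ∧ (fun k => u (k + Pi.single i 1)) ∈ A) ↔
    (∀ (q : AddMonoidAlgebra ℂ (Fin d → ℤ)), ∀ p ∈ annOfSeq d r (A : Set (MSeq d r)),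
        (fun t => q * p t) ∈ annOfSeq d r (A : Set (MSeq d r))) := by
  constructor
  · intro h q p hp
    -- A is invariant under all shifts
    have hshift : ∀ m : Fin d → ℤ, ∀ u ∈ A, (fun k => u (k + m)) ∈ A := by
      set P : (Fin d → ℤ) → Prop := fun m => ∀ u ∈ A, (fun k => u (k + m)) ∈ A with hP
      have hzero : P 0 := by
        intro u hu
        simpa using hu
      have hadd : ∀ m n, P m → P n → P (m + n) := by
        intro m n hm hn u hu
        have h2 := hn _ (hm u hu)
        have heq : (fun k => (fun k' => u (k' + m)) (k + n)) = fun k => u (k + (m + n)) := by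
          funext k
          show u (k + n + m) = u (k + (m + n))
          rw [add_assoc, add_comm n m]
        rwa [heq] at h2
      have hpos : ∀ i : Fin d, P (Pi.single i 1) := fun i u hu => (h i u hu).2
      have hneg : ∀ i : Fin d, P (-(Pi.single i 1)) := by
        intro i u hu
        have := (h i u hu).1
        have heq : (fun k => u (k - Pi.single i 1))
            = fun k : Fin d → ℤ => u (k + (-(Pi.single i 1) : Fin d → ℤ)) := by
          funext k; rw [sub_eq_add_neg]
        rwa [heq] at this
      have hsingle : ∀ (i : Fin d) (n : ℤ), P (Pi.single i n) := by
        intro i n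
        induction n using Int.induction_on with
        | zero => simpa using hzero
        | succ n ih =>
          have heq : (Pi.single i ((n : ℤ) + 1) : Fin d → ℤ)
              = Pi.single i (n : ℤ) + Pi.single i 1 := by
            funext j
            by_cases hj : j = i <;> simp [Pi.single_apply, hj]
          rw [heq]; exact hadd _ _ ih (hpos i)
        | pred n ih =>
          have heq : (Pi.single i (-(n : ℤ) - 1) : Fin d → ℤ)
              = Pi.single i (-(n : ℤ)) + -(Pi.single i 1) := by
            funext j
            by_cases hj : j = i <;> simp [Pi.single_apply, hj] <;> ring
          rw [heq]; exact hadd _ _ ih (hneg i)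
      intro m
      have hm : m = ∑ i : Fin d, Pi.single i (m i) := by
        rw [Finset.univ_sum_single]
      rw [hm]
      exact Finset.sum_induction _ P hadd hzero (fun i _ => hsingle i (m i))
    intro u hu
    induction q using AddMonoidAlgebra.induction_linear with
    | zero =>
      have heq : (fun t : Fin r => (0 : AddMonoidAlgebra ℂ (Fin d → ℤ)) * p t)
          = fun _ => (0 : AddMonoidAlgebra ℂ (Fin d → ℤ)) := by
        funext t; exact zero_mul _
      rw [heq, lauPairing_eq]
      simp
    | add f g hf hg =>
      simp only [add_mul]
      rw [lauPairing_add, hf, hg, add_zero]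
    | single m a =>
      rw [pairing_single_mul]
      rw [hp _ (hshift m u hu), mul_zero]
  · intro h i u hu
    constructor
    · apply mem_of_pairing_eq_zero d r A hA
      intro p hp
      have hq := h (AddMonoidAlgebra.single (-(Pi.single i 1)) 1) p hp u hu
      rw [pairing_single_mul, one_mul] at hq
      have heq : (fun k => u (k + -(Pi.single i 1)))
          = fun k : Fin d → ℤ => u (k - (Pi.single i 1 : Fin d → ℤ)) := by
        funext k; rw [sub_eq_add_neg]
      rwa [heq] at hq
    · apply mem_of_pairing_eq_zero d r A hA
      intro p hp
      have hq := h (AddMonoidAlgebra.single (Pi.single i 1) 1) p hp u hu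
      rwa [pairing_single_mul, one_mul] at hq
end

section
/- Let B be a ℂ(z)-submodule of ℂ(z) ⊗ ℂ^r (ℂ(z) the Laurent polynomial ring in d variables) and let B* = B ∩ (ℂ[z] ⊗ ℂ^r). Then a vectorial polynomially weighted geometric sequence u_{ω,h} : k ↦ ω^k h(k) (with ω ∈ (ℂ\{0})^d and h ∈ ℂ[z] ⊗ ℂ^r) is orthogonal to B under the pairing ⟨p, u⟩ = Σ_k a_k·u(k) if and only if it is orthogonal to B*. -/
/-- The vectorial polynomially weighted geometric sequence `u_{ω,h} : k ↦ ω^k h(k)`. -/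
noncomputable def pgSeq (d r : ℕ) (ω : Fin d → ℂ) (h : Fin r → MvPolynomial (Fin d) ℂ) :
    MSeq d r :=
  fun k t => (∏ i : Fin d, ω i ^ k i) * MvPolynomial.eval (fun i => (k i : ℂ)) (h t)

open MvPolynomial

/-- A multivariate polynomial over `ℂ` vanishing on an integer cone is zero. -/
lemma cone_vanish : ∀ (d : ℕ) (q : MvPolynomial (Fin d) ℂ) (N : ℤ),
    (∀ m : Fin d → ℤ, (∀ i, N ≤ m i) → MvPolynomial.eval (fun i => (m i : ℂ)) q = 0) → q = 0 := by
  intro d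
  induction d with
  | zero =>
    intro q N hq
    obtain ⟨a, rfl⟩ := MvPolynomial.C_surjective (Fin 0) q
    have := hq (fun i => N) (fun i => le_refl _)
    rw [MvPolynomial.eval_C] at this
    rw [this, map_zero]
  | succ d ih =>
    intro q N hq
    have hq' : finSuccEquiv ℂ d q = 0 := by
      apply Polynomial.ext
      intro n
      rw [Polynomial.coeff_zero]
      apply ih _ N
      intro tail htail
      set P : Polynomial ℂ :=
        Polynomial.map (MvPolynomial.eval (fun i => (tail i : ℂ))) (finSuccEquiv ℂ d q) with hP
      have hroots : ∀ z : ℤ, N ≤ z → P.IsRoot (z : ℂ) := by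
        intro z hz
        have := hq (Fin.cons z tail) (by
          intro i
          refine Fin.cases ?_ ?_ i <;> simp [hz, htail])
        have hcast : (fun i => ((Fin.cons z tail : Fin (d+1) → ℤ) i : ℂ)) =
            Fin.cons (z : ℂ) (fun i => (tail i : ℂ)) := by
          funext i
          refine Fin.cases ?_ ?_ i <;> simp
        rw [hcast, eval_eq_eval_mv_eval'] at this
        exact this
      have hPzero : P = 0 := by
        apply Polynomial.eq_zero_of_infinite_isRoot
        apply Set.Infinite.mono (s := (fun z : ℤ => (z : ℂ)) '' Set.Ici N)
        · rintro x ⟨z, hz, rfl⟩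
          exact hroots z hz
        · exact (Set.Ici_infinite N).image
            (Set.injOn_of_injective (fun a b hab => by exact_mod_cast hab))
      have := congrArg (fun Q => Polynomial.coeff Q n) hPzero
      simpa [hP, Polynomial.coeff_map] using this
    have := congrArg (finSuccEquiv ℂ d).symm hq'
    simpa using this

lemma single_mul_eq_mapDomain (d : ℕ) (m : Fin d → ℤ) (f : AddMonoidAlgebra ℂ (Fin d → ℤ)) :
    (AddMonoidAlgebra.single m 1 * f).coeff = Finsupp.mapDomain (fun k => m + k) f.coeff := by
  ext y
  rw [AddMonoidAlgebra.coeff_single_mul_apply, one_mul]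
  conv_rhs => rw [show y = (fun k => m + k) (-m + y) from by simp]
  rw [Finsupp.mapDomain_apply (fun a b hab => by simpa using hab)]

noncomputable def pgPoly (d r : ℕ) (ω : Fin d → ℂ) (h : Fin r → MvPolynomial (Fin d) ℂ)
    (p : LauV d r) : MvPolynomial (Fin d) ℂ :=
  ∑ t, (p t).coeff.sum fun k a =>
    (a * ∏ i, ω i ^ k i) • MvPolynomial.bind₁ (fun i => X i + C (k i : ℂ)) (h t)

lemma pairing_shift (d r : ℕ) (ω : Fin d → ℂ) (hω : ∀ i, ω i ≠ 0)
    (h : Fin r → MvPolynomial (Fin d) ℂ) (p : LauV d r) (m : Fin d → ℤ) :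
    lauPairing d r (AddMonoidAlgebra.single m (1:ℂ) • p) (pgSeq d r ω h) =
      (∏ i, ω i ^ m i) *
        MvPolynomial.eval (fun i => (m i : ℂ)) (pgPoly d r ω h p) := by
  rw [lauPairing, pgPoly, map_sum, Finset.mul_sum]
  apply Finset.sum_congr rfl
  intro t _
  have hpt : (AddMonoidAlgebra.single m (1:ℂ) • p) t = AddMonoidAlgebra.single m (1:ℂ) * p t := by
    simp [Pi.smul_apply, smul_eq_mul]
  rw [hpt, single_mul_eq_mapDomain,
    Finsupp.sum_mapDomain_index (h := fun k a => a * pgSeq d r ω h k t)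
      (fun b => zero_mul _) (fun b a c => add_mul a c _),
    map_finsuppSum, Finsupp.mul_sum]
  apply Finsupp.sum_congr
  intro k _
  rw [smul_eval, pgSeq]
  have harg : MvPolynomial.eval (fun i => (m i : ℂ))
      (MvPolynomial.bind₁ (fun i => X i + C (k i : ℂ)) (h t)) =
      MvPolynomial.eval (fun i => (((m + k) i : ℤ) : ℂ)) (h t) := by
    have hcoe : ∀ (f : Fin d → ℂ) (q : MvPolynomial (Fin d) ℂ),
        MvPolynomial.eval f q = MvPolynomial.aeval f q := by
      intro f q
      rw [← coe_aeval_eq_eval]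
      rfl
    rw [hcoe, hcoe, aeval_bind₁]
    simp only [map_add, aeval_X, aeval_C, Algebra.algebraMap_self_apply]
    have : (fun i => ((m i : ℂ)) + (k i : ℂ)) = fun i => (((m + k) i : ℤ) : ℂ) := by
      funext i
      simp
    rw [this]
  rw [harg]
  have hpow : ∏ i, ω i ^ ((m + k) i) = (∏ i, ω i ^ m i) * ∏ i, ω i ^ k i := by
    rw [← Finset.prod_mul_distrib]
    apply Finset.prod_congr rfl
    intro i _
    rw [Pi.add_apply, zpow_add₀ (hω i)]
  rw [hpow]
  ring

/-- A vectorial polynomially weighted geometric sequence `u_{ω,h}` is orthogonal to a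
`ℂ(z)`-submodule `B` of `ℂ(z) ⊗ ℂ^r` if and only if it is orthogonal to its polynomial part
`B* = B ∩ (ℂ[z] ⊗ ℂ^r)` (the elements of `B` all of whose monomials have nonnegative
exponents). -/
theorem pg_orthogonal_module_iff_polynomial_part (d r : ℕ)
    (B : Submodule (AddMonoidAlgebra ℂ (Fin d → ℤ)) (LauV d r))
    (ω : Fin d → ℂ) (hω : ∀ i, ω i ≠ 0) (h : Fin r → MvPolynomial (Fin d) ℂ) :
    (∀ p ∈ B, lauPairing d r p (pgSeq d r ω h) = 0) ↔
    (∀ p ∈ B, (∀ (t : Fin r), ∀ k ∈ (p t).coeff.support, ∀ i, (0 : ℤ) ≤ k i) →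
      lauPairing d r p (pgSeq d r ω h) = 0) := by
  classical
  constructor
  · intro H p hp _
    exact H p hp
  · intro H p hp
    set S : Finset (Fin d → ℤ) := Finset.univ.biUnion (fun t => (p t).coeff.support) with hS
    set N : ℤ := ((S.sup fun k => Finset.univ.sup fun i => (-(k i)).toNat : ℕ) : ℤ) with hNdef
    have hN : ∀ t : Fin r, ∀ k ∈ (p t).coeff.support, ∀ i, -N ≤ k i := by
      intro t k hk i
      have hkS : k ∈ S := Finset.mem_biUnion.2 ⟨t, Finset.mem_univ t, hk⟩
      have h1 : (-(k i)).toNat ≤ (S.sup fun k => Finset.univ.sup fun i => (-(k i)).toNat) :=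
        le_trans (Finset.le_sup (f := fun i => (-(k i)).toNat) (Finset.mem_univ i))
          (Finset.le_sup (f := fun k => Finset.univ.sup fun i => (-(k i)).toNat) hkS)
      have h2 : -(k i) ≤ N := by
        rw [hNdef]
        exact le_trans (Int.self_le_toNat _) (by exact_mod_cast h1)
      linarith
    have hev : ∀ m : Fin d → ℤ, (∀ i, N ≤ m i) →
        MvPolynomial.eval (fun i => (m i : ℂ)) (pgPoly d r ω h p) = 0 := by
      intro m hm
      have hmem : (AddMonoidAlgebra.single m (1:ℂ)) • p ∈ B := B.smul_mem _ hp
      have hsupp : ∀ t : Fin r, ∀ k ∈ (((AddMonoidAlgebra.single m (1:ℂ)) • p) t).coeff.support,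
          ∀ i, (0:ℤ) ≤ k i := by
        intro t k hk i
        have hpt : ((AddMonoidAlgebra.single m (1:ℂ)) • p) t
            = AddMonoidAlgebra.single m (1:ℂ) * p t := by
          simp [Pi.smul_apply, smul_eq_mul]
        rw [hpt, single_mul_eq_mapDomain] at hk
        have hk2 := Finsupp.mapDomain_support hk
        obtain ⟨k', hk3, rfl⟩ := Finset.mem_image.1 hk2
        have := hN t k' hk3 i
        have hmi := hm i
        simp only [Pi.add_apply]
        linarith
      have h0 := H _ hmem hsupp
      rw [pairing_shift d r ω hω h p m] at h0
      have hωm : (∏ i, ω i ^ m i) ≠ 0 :=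
        Finset.prod_ne_zero_iff.2 fun i _ => zpow_ne_zero _ (hω i)
      exact (mul_eq_zero.1 h0).resolve_left hωm
    have hπ : pgPoly d r ω h p = 0 := cone_vanish d _ N hev
    have hfin := pairing_shift d r ω hω h p 0
    rw [hπ] at hfin
    have h1 : AddMonoidAlgebra.single (0 : Fin d → ℤ) (1:ℂ) = 1 := rfl
    rw [h1, one_smul] at hfin
    simpa using hfin
end

section
/- For a fixed Laurent/polynomial vector p(z) = (p₁,...,p_r) ∈ ℂ[z] ⊗ ℂ^r, vector of polynomials h = (h₁,...,h_r) ∈ ℂ[z] ⊗ ℂ^r, and ω ∈ (ℂ\{0})^d, there exists a polynomial π ∈ ℂ[z₁,...,z_d] such that ⟨z^i p(z), u_{ω,h}⟩ = π(i) ω^i for all i ∈ ℤ^d, where u_{ω,h}(k) = ω^k h(k). -/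
/-- The natural embedding of `ℂ[z₁,…,z_d]` into the Laurent polynomial ring. -/
noncomputable def polyToLaurent (d : ℕ) :
    MvPolynomial (Fin d) ℂ →ₐ[ℂ] AddMonoidAlgebra ℂ (Fin d → ℤ) :=
  MvPolynomial.aeval fun i => AddMonoidAlgebra.single (Pi.single i 1) (1 : ℂ)

lemma single_one_mul_eq_mapDomain {d : ℕ} (m : Fin d → ℤ) (q : AddMonoidAlgebra ℂ (Fin d → ℤ)) :
    (AddMonoidAlgebra.single m (1 : ℂ) * q).coeff = Finsupp.mapDomain (m + ·) q.coeff := by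
  ext y
  rw [AddMonoidAlgebra.coeff_single_mul_apply, one_mul]
  have : y = (m + ·) (-m + y) := by simp
  conv_rhs => rw [this]
  rw [Finsupp.mapDomain_apply (add_right_injective m)]

lemma sum_single_mul {d : ℕ} (m : Fin d → ℤ) (q : AddMonoidAlgebra ℂ (Fin d → ℤ))
    (u : (Fin d → ℤ) → ℂ) :
    (AddMonoidAlgebra.single m (1 : ℂ) * q).coeff.sum (fun k a => a * u k)
      = q.coeff.sum fun k a => a * u (m + k) := by
  rw [single_one_mul_eq_mapDomain,
    Finsupp.sum_mapDomain_index_inj (add_right_injective m)]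


/-- For fixed `p ∈ ℂ[z] ⊗ ℂ^r`, `h ∈ ℂ[z] ⊗ ℂ^r` and `ω ∈ (ℂ\{0})^d` there is a polynomial
`π ∈ ℂ[z₁,…,z_d]` with `⟨z^m p(z), u_{ω,h}⟩ = π(m) ω^m` for every `m ∈ ℤ^d`. -/
theorem pairing_shift_is_polynomial_times_geometric (d r : ℕ)
    (p h : Fin r → MvPolynomial (Fin d) ℂ) (ω : Fin d → ℂ) (hω : ∀ i, ω i ≠ 0) :
    ∃ π : MvPolynomial (Fin d) ℂ, ∀ m : Fin d → ℤ,
      lauPairing d r (fun t => AddMonoidAlgebra.single m (1 : ℂ) * polyToLaurent d (p t))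
          (pgSeq d r ω h)
        = MvPolynomial.eval (fun i => (m i : ℂ)) π * ∏ i : Fin d, ω i ^ m i := by
  refine ⟨∑ t : Fin r, (polyToLaurent d (p t)).coeff.sum fun k a =>
      MvPolynomial.C (a * ∏ i : Fin d, ω i ^ k i) *
        MvPolynomial.aeval (fun i => MvPolynomial.X i + MvPolynomial.C ((k i : ℂ))) (h t), ?_⟩
  intro m
  unfold lauPairing
  simp only [sum_single_mul]
  rw [map_sum, Finset.sum_mul]
  refine Finset.sum_congr rfl fun t _ => ?_
  simp only [Finsupp.sum]
  rw [map_sum, Finset.sum_mul]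
  refine Finset.sum_congr rfl fun k _ => ?_
  simp only [pgSeq, map_mul, MvPolynomial.eval_C]
  have hz : (∏ i : Fin d, ω i ^ (m + k) i) = (∏ i : Fin d, ω i ^ k i) * ∏ i : Fin d, ω i ^ m i := by
    rw [← Finset.prod_mul_distrib]
    refine Finset.prod_congr rfl fun i _ => ?_
    rw [Pi.add_apply, zpow_add₀ (hω i), mul_comm]
  have he : MvPolynomial.eval (fun i => ((m i : ℂ)))
      (MvPolynomial.aeval (fun i => MvPolynomial.X i + MvPolynomial.C ((k i : ℂ))) (h t))
      = MvPolynomial.eval (fun i => (((m + k) i : ℂ))) (h t) := by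
    rw [MvPolynomial.aeval_def, MvPolynomial.eval_eval₂]
    have h1 : ((MvPolynomial.eval fun i => ((m i : ℤ) : ℂ)).comp
        (algebraMap ℂ (MvPolynomial (Fin d) ℂ))) = RingHom.id ℂ := by
      ext c; simp
    have h2 : (fun i => MvPolynomial.eval (fun j => ((m j : ℤ) : ℂ))
        (MvPolynomial.X i + MvPolynomial.C ((k i : ℤ) : ℂ))) = fun i => (((m + k) i : ℤ) : ℂ) := by
      funext i; simp
    rw [h1, h2]
    rfl
  rw [he, hz]; ring
end

section
/- Let A be a closed shift-invariant subspace of C(ℤ^d) ⊗ ℂ^r, let A₊ be the set of restrictions to ℤ₊^d of elements of A, and let P be a shift-invariant linear subspace of A spanned by vectorial polynomially weighted geometric sequences whose restrictions to ℤ₊^d are dense in A₊. Then P is dense in A. -/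
/-- Restriction of a multi-sequence to `ℤ₊^d`. -/
noncomputable def restrictPos (d r : ℕ) (u : MSeq d r) : (Fin d → ℕ) → Fin r → ℂ :=
  fun k => u fun i => (k i : ℤ)

lemma shift_finset_mem {d r : ℕ} (V : Submodule ℂ (MSeq d r))
    (hV : ∀ i : Fin d, ∀ u ∈ V, (fun k => u (k - Pi.single i 1)) ∈ V)
    (s : Finset (Fin d)) {u : MSeq d r} (hu : u ∈ V) :
    (fun k => u (k - ∑ i ∈ s, Pi.single i 1)) ∈ V := by
  induction s using Finset.induction_on with
  | empty => simpa using hu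
  | @insert a s ha ih =>
    have h1 := hV a _ ih
    have he : (fun k => (fun k' => u (k' - ∑ i ∈ s, Pi.single i 1)) (k - Pi.single a 1))
        = (fun k : Fin d → ℤ => u (k - ∑ i ∈ Insert.insert a s, Pi.single i 1)) := by
      funext k
      rw [Finset.sum_insert ha]
      congr 1
      abel
    rwa [he] at h1

lemma shift_one_mem {d r : ℕ} (V : Submodule ℂ (MSeq d r))
    (hV : ∀ i : Fin d, ∀ u ∈ V, (fun k => u (k - Pi.single i 1)) ∈ V)
    {u : MSeq d r} (hu : u ∈ V) :
    (fun k => u (fun i => k i - 1)) ∈ V := by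
  have h1 := shift_finset_mem V hV Finset.univ hu
  have he : (∑ i : Fin d, Pi.single i (1:ℤ)) = fun _ => 1 := by
    funext j
    simp [Finset.sum_apply, Pi.single_apply]
  rw [he] at h1
  exact h1

lemma shift_n_mem {d r : ℕ} (V : Submodule ℂ (MSeq d r))
    (hV : ∀ i : Fin d, ∀ u ∈ V, (fun k => u (k - Pi.single i 1)) ∈ V)
    (n : ℕ) {u : MSeq d r} (hu : u ∈ V) :
    (fun k => u (fun i => k i - n)) ∈ V := by
  induction n with
  | zero => simpa using hu
  | succ n ih =>
    have h1 : (fun k : Fin d → ℤ => u (fun i => k i - 1 - n)) ∈ V := shift_one_mem V hV ih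
    have he : (fun k : Fin d → ℤ => u (fun i => k i - 1 - n))
        = fun k : Fin d → ℤ => u (fun i => k i - (n + 1 : ℕ)) := by
      funext k
      have : (fun i => k i - 1 - (n:ℤ)) = fun i => k i - ((n:ℕ) + 1 : ℕ) := by
        funext i; push_cast; ring
      rw [this]
    rwa [he] at h1

lemma shift_finset_mem' {d r : ℕ} (V : Submodule ℂ (MSeq d r))
    (hV : ∀ i : Fin d, ∀ u ∈ V, (fun k => u (k + Pi.single i 1)) ∈ V)
    (s : Finset (Fin d)) {u : MSeq d r} (hu : u ∈ V) :
    (fun k => u (k + ∑ i ∈ s, Pi.single i 1)) ∈ V := by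
  induction s using Finset.induction_on with
  | empty => simpa using hu
  | @insert a s ha ih =>
    have h1 := hV a _ ih
    have he : (fun k => (fun k' => u (k' + ∑ i ∈ s, Pi.single i 1)) (k + Pi.single a 1))
        = (fun k : Fin d → ℤ => u (k + ∑ i ∈ Insert.insert a s, Pi.single i 1)) := by
      funext k
      rw [Finset.sum_insert ha]
      congr 1
      abel
    rwa [he] at h1

lemma shift_one_mem' {d r : ℕ} (V : Submodule ℂ (MSeq d r))
    (hV : ∀ i : Fin d, ∀ u ∈ V, (fun k => u (k + Pi.single i 1)) ∈ V)
    {u : MSeq d r} (hu : u ∈ V) :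
    (fun k => u (fun i => k i + 1)) ∈ V := by
  have h1 := shift_finset_mem' V hV Finset.univ hu
  have he : (∑ i : Fin d, Pi.single i (1:ℤ)) = fun _ => 1 := by
    funext j
    simp [Finset.sum_apply, Pi.single_apply]
  rw [he] at h1
  exact h1

lemma shift_n_mem' {d r : ℕ} (V : Submodule ℂ (MSeq d r))
    (hV : ∀ i : Fin d, ∀ u ∈ V, (fun k => u (k + Pi.single i 1)) ∈ V)
    (n : ℕ) {u : MSeq d r} (hu : u ∈ V) :
    (fun k => u (fun i => k i + n)) ∈ V := by
  induction n with
  | zero => simpa using hu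
  | succ n ih =>
    have h1 : (fun k : Fin d → ℤ => u (fun i => k i + 1 + n)) ∈ V := shift_one_mem' V hV ih
    have he : (fun k : Fin d → ℤ => u (fun i => k i + 1 + n))
        = fun k : Fin d → ℤ => u (fun i => k i + (n + 1 : ℕ)) := by
      funext k
      have : (fun i => k i + 1 + (n:ℤ)) = fun i => k i + ((n:ℕ) + 1 : ℕ) := by
        funext i; push_cast; ring
      rw [this]
    rwa [he] at h1

/-- Let `A` be a closed shift-invariant subspace of `C(ℤ^d) ⊗ ℂ^r` and let `P ⊆ A` be a
shift-invariant subspace spanned by vectorial polynomially weighted geometric sequences whose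
restrictions to `ℤ₊^d` are dense in the set `A₊` of restrictions of elements of `A`.
Then `P` is dense in `A`. -/
theorem pg_density_transfer (d r : ℕ) (A P : Submodule ℂ (MSeq d r))
    (hAclosed : IsClosed (A : Set (MSeq d r)))
    (hAinv : ∀ (i : Fin d), ∀ u ∈ A,
      (fun k => u (k - Pi.single i 1)) ∈ A ∧ (fun k => u (k + Pi.single i 1)) ∈ A)
    (hPA : P ≤ A)
    (hPpg : (P : Set (MSeq d r)) ⊆
      ↑(Submodule.span ℂ {u : MSeq d r |
          ∃ (ω : Fin d → ℂ) (h : Fin r → MvPolynomial (Fin d) ℂ),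
            (∀ i, ω i ≠ 0) ∧ u = pgSeq d r ω h}))
    (hPinv : ∀ (i : Fin d), ∀ u ∈ P,
      (fun k => u (k - Pi.single i 1)) ∈ P ∧ (fun k => u (k + Pi.single i 1)) ∈ P)
    (hdense : ∀ u ∈ A, restrictPos d r u ∈ closure (restrictPos d r '' (P : Set (MSeq d r)))) :
    (A : Set (MSeq d r)) ⊆ closure (P : Set (MSeq d r)) := by
  intro u hu
  rw [mem_closure_iff]
  intro O hO huO
  obtain ⟨I, U, hU, hsub⟩ := isOpen_pi_iff.mp hO u huO
  -- choose n so that the window I shifts into the nonnegative orthant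
  set n : ℕ := I.sup fun k => Finset.univ.sup fun i : Fin d => (-(k i)).toNat with hn
  have hnk : ∀ k ∈ I, ∀ i : Fin d, (0:ℤ) ≤ k i + n := by
    intro k hk i
    have h1a : (-(k i)).toNat ≤ Finset.univ.sup fun j : Fin d => (-(k j)).toNat :=
      Finset.le_sup (f := fun j : Fin d => (-(k j)).toNat) (Finset.mem_univ i)
    have h1b : (Finset.univ.sup fun j : Fin d => (-(k j)).toNat) ≤ n :=
      Finset.le_sup (f := fun k => Finset.univ.sup fun j : Fin d => (-(k j)).toNat) hk
    have h1 : (-(k i)).toNat ≤ n := le_trans h1a h1b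
    have h2 : -(k i) ≤ ((-(k i)).toNat : ℤ) := Int.self_le_toNat _
    have h3 : ((-(k i)).toNat : ℤ) ≤ n := by exact_mod_cast h1
    linarith
  -- the shifted sequence
  set v : MSeq d r := fun k => u (fun i => k i - n) with hv
  have hvA : v ∈ A := shift_n_mem A (fun i u hu => (hAinv i u hu).1) n hu
  -- open set in the positive-orthant space
  set m : (Fin d → ℤ) → (Fin d → ℕ) := fun k i => (k i + n).toNat with hm
  set O' : Set ((Fin d → ℕ) → Fin r → ℂ) := ⋂ k ∈ I, (fun w => w (m k)) ⁻¹' U k with hO'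
  have hO'open : IsOpen O' := by
    apply isOpen_biInter_finset
    intro k hk
    exact (hU k hk).1.preimage (continuous_apply (m k))
  have hmem : restrictPos d r v ∈ O' := by
    rw [hO']
    simp only [Set.mem_iInter]
    intro k hk
    have harg : (fun j => ((m k j : ℤ)) - (n:ℤ)) = k := by
      funext j
      simp only [hm]
      rw [Int.toNat_of_nonneg (hnk k hk j)]
      ring
    have hvk : restrictPos d r v (m k) = u k := by
      show u (fun j => ((m k j : ℤ)) - (n:ℤ)) = u k
      rw [harg]
    simpa [hvk] using (hU k hk).2
  obtain ⟨w, hwO', hwP⟩ := (mem_closure_iff.mp (hdense v hvA)) O' hO'open hmem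
  obtain ⟨p, hpP, hpw⟩ := hwP
  -- shift p back
  set p' : MSeq d r := fun k => p (fun i => k i + n) with hp'
  have hp'P : p' ∈ P := shift_n_mem' P (fun i u hu => (hPinv i u hu).2) n hpP
  refine ⟨p', hsub ?_, hp'P⟩
  intro k hk
  have hkI : k ∈ I := hk
  have harg : (fun j => ((m k j : ℤ))) = fun j => k j + (n:ℤ) := by
    funext j
    simp only [hm]
    rw [Int.toNat_of_nonneg (hnk k hkI j)]
  have hpk : p' k = w (m k) := by
    rw [← hpw]
    show p (fun j => k j + (n:ℤ)) = p (fun j => ((m k j : ℤ)))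
    rw [harg]
  rw [hpk]
  have := hwO'
  rw [hO'] at this
  simp only [Set.mem_iInter] at this
  exact this k hkI
end

section
/- Let I be an ideal of ℂ[z₁,...,z_d] and let p be a polynomial not in I. Then there exist a constant coefficient linear differential operator D = Σ_k c_k ∂^k (finite sum, c_k ∈ ℂ) and a point ω ∈ ℂ^d such that (Df)(ω) = 0 for all f ∈ I and (Dp)(ω) ≠ 0. -/
open MvPolynomial


/-- The iterated partial differential operator `∂^k = ∂₁^{k₁} ⋯ ∂_d^{k_d}` on
`ℂ[z₁,…,z_d]`. -/
noncomputable def iterDeriv (d : ℕ) (j : Fin d → ℕ) :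
    Module.End ℂ (MvPolynomial (Fin d) ℂ) :=
  ((List.finRange d).map fun i =>
    ((MvPolynomial.pderiv i).toLinearMap : Module.End ℂ (MvPolynomial (Fin d) ℂ)) ^ j i).prod

theorem pow_pderiv_monomial {d : ℕ} (i : Fin d) (m : ℕ) (s : Fin d →₀ ℕ) (a : ℂ) :
    (((MvPolynomial.pderiv i).toLinearMap : Module.End ℂ (MvPolynomial (Fin d) ℂ)) ^ m)
      (monomial s a) = monomial (s - Finsupp.single i m) (a * (s i).descFactorial m) := by
  induction m with
  | zero => simp
  | succ m ih =>
    rw [pow_succ', Module.End.mul_apply, ih]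
    show pderiv i (monomial (s - Finsupp.single i m) (a * (s i).descFactorial m)) = _
    rw [pderiv_monomial]
    congr 1
    · rw [tsub_tsub, ← Finsupp.single_add]
    · have h1 : (s - Finsupp.single i m) i = s i - m := by simp
      rw [h1, Nat.descFactorial_succ, Nat.cast_mul]
      ring

theorem listProd_pderiv_monomial {d : ℕ} (j : Fin d → ℕ) (s : Fin d →₀ ℕ) (a : ℂ) :
    ∀ (l : List (Fin d)), l.Nodup →
    ((l.map fun i =>
      ((MvPolynomial.pderiv i).toLinearMap : Module.End ℂ (MvPolynomial (Fin d) ℂ)) ^ j i).prod)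
      (monomial s a)
      = monomial (s - (l.map fun i => Finsupp.single i (j i)).sum)
          (a * (l.map fun i => ((s i).descFactorial (j i) : ℂ)).prod) := by
  intro l
  induction l with
  | nil => simp
  | cons i t ih =>
    intro hnd
    rw [List.nodup_cons] at hnd
    simp only [List.map_cons, List.prod_cons, List.sum_cons, List.prod_cons,
      Module.End.mul_apply, ih hnd.2, pow_pderiv_monomial]
    have hti : ((t.map fun i' => Finsupp.single i' (j i')).sum) i = 0 := by
      rw [← Finsupp.applyAddHom_apply, map_list_sum]
      refine List.sum_eq_zero ?_
      intro y hy
      simp only [List.map_map, List.mem_map, Function.comp_apply] at hy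
      obtain ⟨i', hi', rfl⟩ := hy
      have : i' ≠ i := fun h => hnd.1 (h ▸ hi')
      simp [Finsupp.single_apply, this]
    have hsi : (s - (t.map fun i' => Finsupp.single i' (j i')).sum) i = s i := by
      rw [Finsupp.tsub_apply, hti, Nat.sub_zero]
    rw [hsi, tsub_tsub, add_comm]
    ring_nf

theorem iterDeriv_monomial {d : ℕ} (K : Fin d →₀ ℕ) (s : Fin d →₀ ℕ) (a : ℂ) :
    iterDeriv d (⇑K) (monomial s a)
      = monomial (s - K) (a * ∏ i : Fin d, ((s i).descFactorial (K i) : ℂ)) := by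
  rw [iterDeriv, listProd_pderiv_monomial _ _ _ _ (List.nodup_finRange d)]
  congr 1
  · congr 1
    rw [← Fin.sum_univ_def fun i => Finsupp.single i (K i), Finsupp.univ_sum_single]

theorem eval_zero_monomial {d : ℕ} (s : Fin d →₀ ℕ) (a : ℂ) :
    eval (0 : Fin d → ℂ) (monomial s a) = if s = 0 then a else 0 := by
  rw [eval_monomial]
  by_cases h : s = 0
  · simp [h]
  · rw [if_neg h]
    obtain ⟨i, hi⟩ : ∃ i, s i ≠ 0 := by
      by_contra hc
      push_neg at hc
      exact h (Finsupp.ext hc)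
    have h2 : s.prod (fun n e => (0 : Fin d → ℂ) n ^ e) = 0 := by
      apply Finset.prod_eq_zero (Finsupp.mem_support_iff.2 hi)
      exact zero_pow hi
    rw [h2, mul_zero]

theorem eval_zero_iterDeriv {d : ℕ} (K : Fin d →₀ ℕ) (g : MvPolynomial (Fin d) ℂ) :
    eval (0 : Fin d → ℂ) (iterDeriv d (⇑K) g)
      = (∏ i : Fin d, ((K i).factorial : ℂ)) * coeff K g := by
  induction g using MvPolynomial.induction_on' with
  | add p q hp hq => rw [map_add, map_add, hp, hq, coeff_add]; ring
  | monomial s a =>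
    rw [iterDeriv_monomial, eval_zero_monomial, coeff_monomial]
    by_cases h : s = K
    · subst h
      simp [Nat.descFactorial_self, mul_comm]
    · rw [if_neg h, mul_zero]
      by_cases hle : s - K = 0
      · rw [if_pos hle]
        obtain ⟨i, hi⟩ : ∃ i, s i < K i := by
          by_contra hc
          push_neg at hc
          exact h (le_antisymm (tsub_eq_zero_iff_le.1 hle) (Finsupp.le_def.2 hc))
        have hz : ((s i).descFactorial (K i) : ℂ) = 0 := by
          rw [Nat.descFactorial_eq_zero_iff_lt.2 hi, Nat.cast_zero]
        rw [Finset.prod_eq_zero (Finset.mem_univ i) hz, mul_zero]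
      · rw [if_neg hle]

noncomputable def shiftPoly (d : ℕ) (ω : Fin d → ℂ) :
    MvPolynomial (Fin d) ℂ →ₐ[ℂ] MvPolynomial (Fin d) ℂ :=
  aeval fun i => X i + C (ω i)

theorem shiftPoly_shiftPoly (d : ℕ) (ω ω' : Fin d → ℂ) (f : MvPolynomial (Fin d) ℂ) :
    shiftPoly d ω (shiftPoly d ω' f) = shiftPoly d (ω + ω') f := by
  have : (shiftPoly d ω).comp (shiftPoly d ω') = shiftPoly d (ω + ω') := by
    apply MvPolynomial.algHom_ext
    intro i
    simp [shiftPoly, add_assoc]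
  calc shiftPoly d ω (shiftPoly d ω' f) = ((shiftPoly d ω).comp (shiftPoly d ω')) f := rfl
    _ = shiftPoly d (ω + ω') f := by rw [this]

theorem shiftPoly_bijective (d : ℕ) (ω : Fin d → ℂ) : Function.Bijective (shiftPoly d ω) := by
  have h1 : ∀ f, shiftPoly d ω (shiftPoly d (-ω) f) = f := by
    intro f; rw [shiftPoly_shiftPoly]; simp [shiftPoly]
  have h2 : ∀ f, shiftPoly d (-ω) (shiftPoly d ω f) = f := by
    intro f; rw [shiftPoly_shiftPoly]; simp [shiftPoly]
  exact ⟨Function.LeftInverse.injective h2, Function.RightInverse.surjective h1⟩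

theorem pderiv_shiftPoly {d : ℕ} (ω : Fin d → ℂ) (i : Fin d) (f : MvPolynomial (Fin d) ℂ) :
    pderiv i (shiftPoly d ω f) = shiftPoly d ω (pderiv i f) := by
  induction f using MvPolynomial.induction_on with
  | C a => simp [shiftPoly]
  | add p q hp hq => simp [map_add, hp, hq]
  | mul_X p j hp =>
    have hX : shiftPoly d ω (X j) = X j + C (ω j) := aeval_X _ j
    by_cases h : j = i
    · subst h
      simp [pderiv_mul, map_add, map_mul, hp, hX, pderiv_X_self, pderiv_C]
    · simp [pderiv_mul, map_add, map_mul, hp, hX, pderiv_X_of_ne h, pderiv_C]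

theorem iterDeriv_shiftPoly {d : ℕ} (ω : Fin d → ℂ) (j : Fin d → ℕ)
    (f : MvPolynomial (Fin d) ℂ) :
    iterDeriv d j (shiftPoly d ω f) = shiftPoly d ω (iterDeriv d j f) := by
  have key : ∀ (l : List (Fin d)) (f : MvPolynomial (Fin d) ℂ),
      ((l.map fun i =>
        ((MvPolynomial.pderiv i).toLinearMap : Module.End ℂ (MvPolynomial (Fin d) ℂ)) ^ j i).prod)
        (shiftPoly d ω f)
      = shiftPoly d ω (((l.map fun i =>
        ((MvPolynomial.pderiv i).toLinearMap : Module.End ℂ (MvPolynomial (Fin d) ℂ)) ^ j i).prod) f) := by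
    intro l
    induction l with
    | nil => intro f; simp
    | cons i t ih =>
      intro f
      simp only [List.map_cons, List.prod_cons, Module.End.mul_apply, ih f]
      generalize (((t.map fun i =>
        ((MvPolynomial.pderiv i).toLinearMap : Module.End ℂ (MvPolynomial (Fin d) ℂ)) ^ j i).prod) f) = g
      induction (j i) with
      | zero => simp
      | succ m ihm =>
        rw [pow_succ', Module.End.mul_apply, Module.End.mul_apply, ihm]
        exact pderiv_shiftPoly ω i _
  exact key _ f

theorem eval_shiftPoly {d : ℕ} (ω : Fin d → ℂ) (f : MvPolynomial (Fin d) ℂ) :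
    eval (0 : Fin d → ℂ) (shiftPoly d ω f) = eval ω f := by
  have h : (aeval (0 : Fin d → ℂ)).comp (shiftPoly d ω) = aeval ω := by
    rw [shiftPoly, comp_aeval]
    congr 1
    funext i
    simp
  have h0 : ∀ (x : Fin d → ℂ) (g : MvPolynomial (Fin d) ℂ), aeval x g = eval x g := fun x g =>
    DFunLike.congr_fun (MvPolynomial.coe_aeval_eq_eval x) g
  rw [← h0, ← h0, ← AlgHom.comp_apply, h]

open MvPolynomial in
theorem monomial_mem_pow {d : ℕ} (n : ℕ) (s : Fin d →₀ ℕ) (hs : n ≤ s.sum fun _ e => e) (a : ℂ) :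
    monomial s a ∈ (vanishingIdeal ℂ ({0} : Set (Fin d → ℂ))) ^ n := by
  set P : Ideal (MvPolynomial (Fin d) ℂ) := vanishingIdeal ℂ ({0} : Set (Fin d → ℂ))
  have hX : ∀ i : Fin d, X i ∈ P := by
    intro i
    rw [mem_vanishingIdeal_singleton_iff]
    simp
  have key : ∀ (t : Finset (Fin d)), (∏ i ∈ t, (X i : MvPolynomial (Fin d) ℂ) ^ s i)
      ∈ P ^ (∑ i ∈ t, s i) := by
    intro t
    induction t using Finset.induction with
    | empty => simp [Ideal.one_eq_top]
    | @insert i t' hni ih =>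
      rw [Finset.prod_insert hni, Finset.sum_insert hni, pow_add]
      exact Ideal.mul_mem_mul (Ideal.pow_mem_pow (hX i) _) ih
  have hmono : monomial s a = C a * ∏ i ∈ s.support, (X i : MvPolynomial (Fin d) ℂ) ^ s i := by
    rw [monomial_eq]; rfl
  rw [hmono]
  have h1 : (∏ i ∈ s.support, (X i : MvPolynomial (Fin d) ℂ) ^ s i) ∈ P ^ n := by
    refine Ideal.pow_le_pow_right ?_ (key s.support)
    exact hs
  exact Ideal.mul_mem_left _ _ h1

open MvPolynomial in
theorem trunc_sub_mem {d : ℕ} (n : ℕ) (Kset : Finset (Fin d →₀ ℕ))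
    (hK : ∀ k : Fin d →₀ ℕ, (k.sum fun _ e => e) < n → k ∈ Kset)
    (g : MvPolynomial (Fin d) ℂ) :
    g - ∑ k ∈ Kset.filter (fun k => (k.sum fun _ e => e) < n), monomial k (coeff k g)
      ∈ (vanishingIdeal ℂ ({0} : Set (Fin d → ℂ))) ^ n := by
  have hsub : ∑ k ∈ g.support.filter (fun k => (k.sum fun _ e => e) < n), monomial k (coeff k g)
      = ∑ k ∈ Kset.filter (fun k => (k.sum fun _ e => e) < n), monomial k (coeff k g) := by
    apply Finset.sum_subset
    · intro k hk
      rw [Finset.mem_filter] at hk ⊢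
      exact ⟨hK k hk.2, hk.2⟩
    · intro k hk hk2
      rw [Finset.mem_filter] at hk
      have hns : k ∉ g.support := fun hs => hk2 (Finset.mem_filter.2 ⟨hs, hk.2⟩)
      rw [MvPolynomial.notMem_support_iff.1 hns, map_zero]
  rw [← hsub]
  have hg : g = (∑ k ∈ g.support.filter (fun k => (k.sum fun _ e => e) < n),
      monomial k (coeff k g)) + ∑ k ∈ g.support.filter (fun k => ¬ (k.sum fun _ e => e) < n),
      monomial k (coeff k g) := by
    rw [Finset.sum_filter_add_sum_filter_not, support_sum_monomial_coeff]
  rw [sub_eq_of_eq_add' hg]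
  apply Ideal.sum_mem
  intro k hk
  rw [Finset.mem_filter] at hk
  exact monomial_mem_pow n k (not_lt.1 hk.2) _


theorem stepA {R : Type*} [CommRing R] [IsNoetherianRing R] (I : Ideal R) (p : R) (hp : p ∉ I) :
    ∃ (m : Ideal R), m.IsMaximal ∧ ∃ n : ℕ, p ∉ I + m ^ n := by
  set A := R ⧸ I
  set x : A := Ideal.Quotient.mk I p with hx
  have hx0 : x ≠ 0 := by
    rw [hx, Ne, Ideal.Quotient.eq_zero_iff_mem]; exact hp
  have hAnn : Ideal.torsionOf A A x ≠ ⊤ := by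
    simpa [Ideal.torsionOf_eq_top_iff] using hx0
  obtain ⟨mb, hmb, hle⟩ := Ideal.exists_le_maximal _ hAnn
  -- x is not in some power of mb
  have hxn : ∃ n : ℕ, x ∉ mb ^ n := by
    by_contra h
    push_neg at h
    have hxin : x ∈ (⨅ i : ℕ, mb ^ i • ⊤ : Submodule A A) := by
      refine Submodule.mem_iInf _ |>.2 fun i => ?_
      have : (mb ^ i • ⊤ : Submodule A A) = mb ^ i := by
        rw [smul_eq_mul, Ideal.mul_top]
      rw [this]; exact h i
    obtain ⟨r, hr⟩ := (Ideal.mem_iInf_smul_pow_eq_bot_iff mb x).1 hxin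
    have h1 : (1 - (r : A)) ∈ Ideal.torsionOf A A x := by
      rw [Ideal.mem_torsionOf_iff, sub_smul, one_smul, hr, sub_self]
    have : (1 : A) ∈ mb := by
      have := mb.add_mem (hle h1) r.2
      simpa using this
    exact hmb.ne_top (Ideal.eq_top_iff_one _ |>.2 this)
  obtain ⟨n, hn⟩ := hxn
  refine ⟨Ideal.comap (Ideal.Quotient.mk I) mb, ?_, n, ?_⟩
  · exact Ideal.comap_isMaximal_of_surjective _ Ideal.Quotient.mk_surjective
  · intro hmem
    apply hn
    have h2 : x ∈ Ideal.map (Ideal.Quotient.mk I) (I + (Ideal.comap (Ideal.Quotient.mk I) mb) ^ n) :=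
      Ideal.mem_map_of_mem _ hmem
    rw [Ideal.add_eq_sup, Ideal.map_sup, Ideal.map_pow,
      Ideal.map_comap_of_surjective _ Ideal.Quotient.mk_surjective,
      Ideal.map_quotient_self, bot_sup_eq] at h2
    exact h2

set_option maxHeartbeats 1000000 in
set_option synthInstance.maxHeartbeats 400000 in
/-- **Ideal separation by constant coefficient differential operators.** If `I` is an ideal of
`ℂ[z₁,…,z_d]` and `p ∉ I`, then there exist a constant coefficient linear differential operator
`D = Σ_k c_k ∂^k` (a finite sum) and a point `ω ∈ ℂ^d` such that `(Df)(ω) = 0` for all `f ∈ I`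
while `(Dp)(ω) ≠ 0`. -/
theorem ideal_separation_by_differential_operator (d : ℕ)
    (I : Ideal (MvPolynomial (Fin d) ℂ)) (p : MvPolynomial (Fin d) ℂ) (hp : p ∉ I) :
    ∃ (c : (Fin d →₀ ℕ) →₀ ℂ) (ω : Fin d → ℂ),
      (∀ f ∈ I, MvPolynomial.eval ω (c.sum fun k ck => ck • iterDeriv d (fun i => k i) f) = 0) ∧
      MvPolynomial.eval ω (c.sum fun k ck => ck • iterDeriv d (fun i => k i) p) ≠ 0 := by
  classical
  obtain ⟨m, hmmax, n, hpn⟩ := stepA I p hp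
  obtain ⟨ω, hmeq⟩ := (MvPolynomial.isMaximal_iff_eq_vanishingIdeal_singleton (I := m)).1 hmmax
  set σ : MvPolynomial (Fin d) ℂ →ₐ[ℂ] MvPolynomial (Fin d) ℂ := shiftPoly d ω with hσ
  have hσbij := shiftPoly_bijective d ω
  set P : Ideal (MvPolynomial (Fin d) ℂ) := vanishingIdeal ℂ ({0} : Set (Fin d → ℂ)) with hP
  set J : Ideal (MvPolynomial (Fin d) ℂ) := I + m ^ n with hJ
  set J' : Ideal (MvPolynomial (Fin d) ℂ) := Ideal.map σ J with hJ'
  -- σ p ∉ J'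
  have hp' : σ p ∉ J' := by
    intro hmem
    rw [hJ', Ideal.mem_map_iff_of_surjective σ hσbij.2] at hmem
    obtain ⟨x, hx, hxe⟩ := hmem
    exact hpn (hσbij.1 hxe ▸ hx)
  -- map σ m = P
  have hmP : Ideal.map σ m = P := by
    apply le_antisymm
    · rw [Ideal.map_le_iff_le_comap]
      intro f hf
      have : eval ω f = 0 := by
        rw [hmeq] at hf
        exact (mem_vanishingIdeal_singleton_iff ω f).1 hf
      show σ f ∈ P
      rw [hP, mem_vanishingIdeal_singleton_iff]; show eval (0 : Fin d → ℂ) (σ f) = 0; rw [eval_shiftPoly]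
      exact this
    · intro g hg
      obtain ⟨f, hf⟩ := hσbij.2 g
      refine Ideal.mem_map_iff_of_surjective σ hσbij.2 |>.2 ⟨f, ?_, hf⟩
      rw [hmeq, mem_vanishingIdeal_singleton_iff]; show eval ω f = 0; rw [← eval_shiftPoly ω f, hf]
      exact (mem_vanishingIdeal_singleton_iff 0 g).1 hg
  have hPn : P ^ n ≤ J' := by
    rw [← hmP, ← Ideal.map_pow]
    apply Ideal.map_mono
    rw [hJ]
    exact le_sup_right
  have hI' : ∀ f ∈ I, σ f ∈ J' := by
    intro f hf
    apply Ideal.mem_map_of_mem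
    rw [hJ]
    exact Ideal.mem_sup_left hf
  -- the separating functional
  set V := MvPolynomial (Fin d) ℂ ⧸ (Submodule.restrictScalars ℂ J')
  set mk : MvPolynomial (Fin d) ℂ →ₗ[ℂ] V := (Submodule.restrictScalars ℂ J').mkQ with hmk
  have hpV : mk (σ p) ≠ 0 := by
    rw [hmk, Submodule.mkQ_apply, Ne, Submodule.Quotient.mk_eq_zero]
    exact hp'
  obtain ⟨φ, hφ⟩ : ∃ φ : Module.Dual ℂ V, φ (mk (σ p)) ≠ 0 := by
    by_contra h
    push_neg at h
    exact hpV ((Module.forall_dual_apply_eq_zero_iff ℂ _).1 h)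
  set L : MvPolynomial (Fin d) ℂ →ₗ[ℂ] ℂ := φ ∘ₗ mk with hL
  have hLJ' : ∀ g ∈ J', L g = 0 := by
    intro g hg
    have : mk g = 0 := by
      rw [hmk, Submodule.mkQ_apply, Submodule.Quotient.mk_eq_zero]
      exact hg
    rw [hL, LinearMap.comp_apply, this, map_zero]
  -- the coefficients
  set Kset : Finset (Fin d →₀ ℕ) :=
    Finset.Iic (Finsupp.equivFunOnFinite.symm fun _ : Fin d => n) with hKset
  have hKmem : ∀ k : Fin d →₀ ℕ, (k.sum fun _ e => e) < n → k ∈ Kset := by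
    intro k hk
    rw [hKset, Finset.mem_Iic]
    intro i
    have h1 : k i ≤ k.sum fun _ e => e := by
      by_cases h : k i = 0
      · simp [h]
      · exact Finset.single_le_sum (fun _ _ => Nat.zero_le _) (Finsupp.mem_support_iff.2 h)
    simpa using le_trans h1 (le_of_lt hk) |>.trans (le_refl n)
  set c' : (Fin d →₀ ℕ) → ℂ := fun k =>
    if (k.sum fun _ e => e) < n then L (monomial k 1) / (∏ i, ((k i).factorial : ℂ)) else 0
    with hc'
  have hc'supp : ∀ k, c' k ≠ 0 → k ∈ Kset := by
    intro k hk
    rw [hc'] at hk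
    by_cases h : (k.sum fun _ e => e) < n
    · exact hKmem k h
    · simp [h] at hk
  set c : (Fin d →₀ ℕ) →₀ ℂ := Finsupp.onFinset Kset c' hc'supp with hc
  -- main evaluation identity
  have keyEval : ∀ f : MvPolynomial (Fin d) ℂ,
      MvPolynomial.eval ω (c.sum fun k ck => ck • iterDeriv d (fun i => k i) f) = L (σ f) := by
    intro f
    have hfact : ∀ k : Fin d →₀ ℕ, (∏ i, ((k i).factorial : ℂ)) ≠ 0 := by
      intro k
      apply Finset.prod_ne_zero_iff.2
      intro i _
      exact_mod_cast Nat.factorial_ne_zero (k i)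
    have hsum : (c.sum fun k ck => ck • iterDeriv d (fun i => k i) f)
        = ∑ k ∈ Kset, c' k • iterDeriv d (⇑k) f := by
      rw [hc]
      exact Finsupp.onFinset_sum hc'supp (fun k => by simp)
    rw [hsum, map_sum]
    have hterm : ∀ k ∈ Kset, eval ω (c' k • iterDeriv d (⇑k) f)
        = (if (k.sum fun _ e => e) < n then L (monomial k (coeff k (σ f))) else 0) := by
      intro k _
      rw [smul_eq_C_mul, map_mul, eval_C]
      have : eval ω (iterDeriv d (⇑k) f)
          = (∏ i, ((k i).factorial : ℂ)) * coeff k (σ f) := by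
        rw [← eval_shiftPoly ω, ← iterDeriv_shiftPoly, eval_zero_iterDeriv]
      rw [this, hc']
      beta_reduce
      by_cases h : (k.sum fun _ e => e) < n
      · rw [if_pos h, if_pos h]
        have hmono : monomial k (coeff k (σ f)) = coeff k (σ f) • monomial k (1 : ℂ) := by
          rw [smul_monomial, smul_eq_mul, mul_one]
        rw [hmono, map_smul, smul_eq_mul]
        have hF := hfact k
        calc L (monomial k 1) / (∏ i, ((k i).factorial : ℂ))
              * ((∏ i, ((k i).factorial : ℂ)) * coeff k (σ f))
            = coeff k (σ f) * L (monomial k 1)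
              * ((∏ i, ((k i).factorial : ℂ)) / (∏ i, ((k i).factorial : ℂ))) := by ring
          _ = coeff k (σ f) * L (monomial k 1) := by rw [div_self hF, mul_one]
      · rw [if_neg h, if_neg h, zero_mul]
    rw [Finset.sum_congr rfl hterm, ← Finset.sum_filter, ← map_sum]
    -- now L (trunc) = L (σ f)
    have hmem := trunc_sub_mem n Kset hKmem (σ f)
    have h0 : L (σ f - ∑ k ∈ Kset.filter (fun k => (k.sum fun _ e => e) < n),
        monomial k (coeff k (σ f))) = 0 := hLJ' _ (hPn hmem)
    rw [map_sub] at h0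
    exact (sub_eq_zero.1 h0).symm
  refine ⟨c, ω, ?_, ?_⟩
  · intro f hf
    rw [keyEval f]
    exact hLJ' _ (hI' f hf)
  · rw [keyEval p]
    exact fun h => hφ (by rw [hL, LinearMap.comp_apply] at h; exact h)
end
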